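/- Let (G_n)_{n∈ℕ} be an inverse system of finite nilpotent groups with surjective transition maps and let G = lim← G_n be the inverse limit. If G is just-infinite (infinite and every nontrivial closed normal subgroup has finite index), then G is topologically finitely generated. -/

import Mathlib

namespace InvLim

variable {Gn : ℕ → Type*} [∀ n, Group (Gn n)]

/-- The inverse limit of an `ℕ`-indexed inverse system of groups with transition maps
`f n : G_{n+1} →* G_n`, realized as the subgroup of compatible sequences in the product. -/
def invLim (Gn : ℕ → Type*) [∀ n, Group (Gn n)] (f : ∀ n, Gn (n + 1) →* Gn n) :
    Subgroup (∀ n, Gn n) where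
  carrier := {x | ∀ n, f n (x (n + 1)) = x n}
  one_mem' := fun n => by simp
  mul_mem' := by
    intro x y hx hy n
    simp only [Pi.mul_apply, map_mul, hx n, hy n]
  inv_mem' := by
    intro x hx n
    simp only [Pi.inv_apply, map_inv, hx n]

/-- The canonical projection `π_n : lim← G_n → G_n`. -/
def plim (Gn : ℕ → Type*) [∀ n, Group (Gn n)] (f : ∀ n, Gn (n + 1) →* Gn n) (n : ℕ) :
    ↥(invLim Gn f) →* Gn n :=
  (Pi.evalMonoidHom Gn n).comp (invLim Gn f).subtype

/-- The congruence topology on the inverse limit: the topology induced from the product of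
the discrete topologies, for which the kernels `ker π_n` form a base of open neighborhoods
of the identity. -/
instance invLimTopology (Gn : ℕ → Type*) [∀ n, Group (Gn n)] (f : ∀ n, Gn (n + 1) →* Gn n) :
    TopologicalSpace ↥(invLim Gn f) :=
  TopologicalSpace.induced (Subtype.val) (@Pi.topologicalSpace ℕ Gn (fun _ => ⊥))

end InvLim

/-! Pick `x ≠ 1` and let `K` be generated by `x` and the commutators. The closure of `K` is a
nontrivial closed subgroup containing `[G, G]`, hence normal, hence of finite index, so `K`
together with a finite set `S` of coset representatives generates a dense subgroup. As the
kernels of the projections `π_n` form a neighbourhood basis of `1`, a subgroup `H` is dense iff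
`π_n(H) = π_n(G)` for all `n`; thus `π_n⟨S, x⟩` together with the commutators generates the
finite nilpotent group `π_n(G)`. There the commutator subgroup lies in the Frattini subgroup, so
`π_n⟨S, x⟩ = π_n(G)` for all `n`, i.e. `⟨S, x⟩` is dense. -/

open Filter Topology

/-- Maximal subgroups of a nilpotent group are normal, and a nontrivial nilpotent group without
proper nontrivial subgroups has full center. -/
theorem commutator_le_of_isCoatom {G : Type*} [Group G] [Group.IsNilpotent G] {M : Subgroup G}
    (hM : IsCoatom M) : commutator G ≤ M := by
  have := Subgroup.NormalizerCondition.normal_of_coatom M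
    Group.normalizerCondition_of_isNilpotent hM
  have : IsSimpleOrder (Subgroup (G ⧸ M)) :=
    have : IsSimpleOrder (Set.Ici M) := Set.isSimpleOrder_Ici_iff_isCoatom.mpr hM
    OrderIso.isSimpleOrder (β := Set.Ici M) (QuotientGroup.comapMk'OrderIso M)
  have : Nontrivial (G ⧸ M) := Subgroup.nontrivial_iff.mp inferInstance
  rw [← Subgroup.Normal.quotient_commutative_iff_commutator_le, ← Subgroup.center_eq_top_iff]
  exact (eq_bot_or_eq_top _).resolve_left (Group.IsNilpotent.center_ne_bot _)

theorem commutator_le_frattini {G : Type*} [Group G] [Group.IsNilpotent G] :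
    commutator G ≤ frattini G :=
  le_iInf₂ fun _ => commutator_le_of_isCoatom

theorem Subgroup.eq_top_of_sup_commutator_eq_top {G : Type*} [Group G] [Finite G]
    [Group.IsNilpotent G] {H : Subgroup G} (h : H ⊔ _root_.commutator G = ⊤) : H = ⊤ :=
  frattini_nongenerating (top_le_iff.mp (h ▸ sup_le_sup_left commutator_le_frattini H))

theorem Subgroup.exists_finite_closure_sup_eq_top {G : Type*} [Group G] (N : Subgroup G)
    [N.FiniteIndex] : ∃ S : Set G, S.Finite ∧ closure S ⊔ N = ⊤ := by
  have := N.finite_quotient_of_finiteIndex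
  refine ⟨Set.range (Quotient.out : G ⧸ N → G), Set.finite_range _,
    (eq_top_iff' _).mpr fun g => ?_⟩
  obtain ⟨h, hg⟩ := QuotientGroup.mk_out_eq_mul N g
  rw [← mul_inv_cancel_right g h, ← hg]
  exact mul_mem (mem_sup_left (subset_closure ⟨_, rfl⟩)) (mem_sup_right (inv_mem h.2))

theorem Subgroup.exists_finite_dense_closure_sup {G : Type*} [Group G] [TopologicalSpace G]
    [IsTopologicalGroup G] (K : Subgroup G) [K.topologicalClosure.FiniteIndex] :
    ∃ S : Set G, S.Finite ∧ Dense ((closure S ⊔ K : Subgroup G) : Set G) := by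
  obtain ⟨S, hS, hSK⟩ := K.topologicalClosure.exists_finite_closure_sup_eq_top
  refine ⟨S, hS, dense_iff_closure_eq.mpr ?_⟩
  rw [← topologicalClosure_coe, ← coe_top, SetLike.coe_set_eq, eq_top_iff, ← hSK]
  exact sup_le (le_sup_left.trans (le_topologicalClosure _))
    (topologicalClosure_mono le_sup_right)

namespace InvLim

section

variable {Gn : ℕ → Type*} [∀ n, Group (Gn n)] {f : ∀ n, Gn (n + 1) →* Gn n}

instance : IsTopologicalGroup ↥(invLim Gn f) :=
  let _ : ∀ n, TopologicalSpace (Gn n) := fun _ => ⊥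
  have : ∀ n, DiscreteTopology (Gn n) := fun _ => ⟨rfl⟩
  inferInstanceAs (IsTopologicalGroup (invLim Gn f))

theorem plim_eq_of_le {x y : ↥(invLim Gn f)} {n m : ℕ} (hnm : n ≤ m)
    (h : plim Gn f m x = plim Gn f m y) : plim Gn f n x = plim Gn f n y := by
  induction m, hnm using Nat.le_induction with
  | base => exact h
  | succ m _ ih =>
    refine ih ?_
    have hx : f m (plim Gn f (m + 1) x) = plim Gn f m x := x.2 m
    have hy : f m (plim Gn f (m + 1) y) = plim Gn f m y := y.2 m
    rw [← hx, ← hy, h]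

theorem hasBasis_nhds (y : ↥(invLim Gn f)) :
    (𝓝 y).HasBasis (fun _ : ℕ => True) (fun n => {z | plim Gn f n z = plim Gn f n y}) := by
  let _ : ∀ n, TopologicalSpace (Gn n) := fun _ => ⊥
  have : ∀ n, DiscreteTopology (Gn n) := fun _ => ⟨rfl⟩
  have : 𝓝 y = ⨅ n, 𝓟 {z | plim Gn f n z = plim Gn f n y} := by
    rw [nhds_induced, nhds_pi, Filter.pi, Filter.comap_iInf]
    simp only [nhds_discrete, Filter.comap_pure, Filter.comap_principal]
    rfl
  rw [this]
  exact hasBasis_iInf_principal (Antitone.directed_ge fun n m hnm z hz => plim_eq_of_le hnm hz)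

theorem mem_closure_iff_exists_plim_eq {A : Set ↥(invLim Gn f)} {z : ↥(invLim Gn f)} :
    z ∈ closure A ↔ ∀ n, ∃ w ∈ A, plim Gn f n w = plim Gn f n z := by
  simp only [mem_closure_iff_nhds_basis (hasBasis_nhds z), true_implies, Set.mem_ofPred_eq]

theorem dense_iff_map_rangeRestrict_eq_top {H : Subgroup ↥(invLim Gn f)} :
    Dense (H : Set ↥(invLim Gn f)) ↔ ∀ n, H.map (plim Gn f n).rangeRestrict = ⊤ := by
  simp only [Dense, mem_closure_iff_exists_plim_eq, Subgroup.eq_top_iff', Subgroup.mem_map,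
    SetLike.mem_coe]
  refine ⟨fun h n y => ?_, fun h z n => ?_⟩
  · obtain ⟨z, rfl⟩ := (plim Gn f n).rangeRestrict_surjective y
    obtain ⟨w, hw, hwz⟩ := h z n
    exact ⟨w, hw, Subtype.ext hwz⟩
  · obtain ⟨w, hw, hwz⟩ := h n ((plim Gn f n).rangeRestrict z)
    exact ⟨w, hw, congrArg Subtype.val hwz⟩

theorem dense_of_dense_sup_commutator [∀ n, Finite (Gn n)] [∀ n, Group.IsNilpotent (Gn n)]
    {H : Subgroup ↥(invLim Gn f)} (h : Dense ((H ⊔ commutator ↥(invLim Gn f) :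
      Subgroup ↥(invLim Gn f)) : Set ↥(invLim Gn f))) :
    Dense (H : Set ↥(invLim Gn f)) := by
  rw [dense_iff_map_rangeRestrict_eq_top] at h ⊢
  intro n
  apply Subgroup.eq_top_of_sup_commutator_eq_top
  rw [← h n, Subgroup.map_sup, map_commutator_eq, MonoidHom.range_eq_top.mpr
    (plim Gn f n).rangeRestrict_surjective, commutator_def]

end

theorem statement_5_general (Gn : ℕ → Type*) [∀ n, Group (Gn n)] [∀ n, Finite (Gn n)]
    (hnil : ∀ n, Group.IsNilpotent (Gn n))
    (f : ∀ n, Gn (n + 1) →* Gn n)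
    (hinf : Infinite ↥(invLim Gn f))
    (hji : ∀ N : Subgroup ↥(invLim Gn f), N.Normal →
      IsClosed (N : Set ↥(invLim Gn f)) → N ≠ ⊥ → N.index ≠ 0) :
    ∃ S : Set ↥(invLim Gn f), S.Finite ∧
      Dense ((Subgroup.closure S : Subgroup ↥(invLim Gn f)) : Set ↥(invLim Gn f)) := by
  obtain ⟨x, hx⟩ := exists_ne (1 : ↥(invLim Gn f))
  set K := Subgroup.closure {x} ⊔ commutator ↥(invLim Gn f)
  have hxK : x ∈ K.topologicalClosure :=
    K.le_topologicalClosure (Subgroup.mem_sup_left (Subgroup.mem_closure_singleton_self x))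
  have : K.topologicalClosure.FiniteIndex :=
    ⟨hji _ (.of_commutator_le _ (le_sup_right.trans K.le_topologicalClosure))
      K.isClosed_topologicalClosure fun h => hx (Subgroup.mem_bot.mp (h ▸ hxK))⟩
  obtain ⟨S, hS, hSK⟩ := K.exists_finite_dense_closure_sup
  refine ⟨S ∪ {x}, hS.union (Set.finite_singleton x), dense_of_dense_sup_commutator ?_⟩
  rwa [Subgroup.closure_union, sup_assoc]

/-- If the inverse limit `G = lim← G_n` of an inverse system of finite
nilpotent groups with surjective transition maps is just-infinite (infinite and every
nontrivial closed normal subgroup has finite index), then `G` is topologically finitely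
generated. -/
theorem statement_5 (Gn : ℕ → Type*) [∀ n, Group (Gn n)] [∀ n, Finite (Gn n)]
    (hnil : ∀ n, Group.IsNilpotent (Gn n))
    (f : ∀ n, Gn (n + 1) →* Gn n) (hf : ∀ n, Function.Surjective (f n))
    (hinf : Infinite ↥(invLim Gn f))
    (hji : ∀ N : Subgroup ↥(invLim Gn f), N.Normal →
      IsClosed (N : Set ↥(invLim Gn f)) → N ≠ ⊥ → N.index ≠ 0) :
    ∃ S : Set ↥(invLim Gn f), S.Finite ∧
      Dense ((Subgroup.closure S : Subgroup ↥(invLim Gn f)) : Set ↥(invLim Gn f)) :=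
  statement_5_general Gn hnil f hinf hji

end InvLim
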